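/- arXiv:2107.02666 — 2 statements merged into one kernel-verified Lean document; each statement's English description precedes it below -/
import Mathlib

section
/- Let A, B be n×n matrices and let O : Fin n → ℝ satisfy (1-β)·d_H(A(i,·),B(i,·)) ≤ O(i) ≤ (1+β)·d_H(A(i,·),B(i,·)) for all i, where 0 < β < 1. Partition [n] into buckets Y_k = {i : (1+β)^(k-1) ≤ O(i) < (1+β)^k} for k = 1,…,t (where t is large enough that all i with O(i) ≥ 1 fall in some bucket, and indices with O(i) < 1 have O(i) = 0, i.e., d_H = 0). Then (1-β)·D_M(A,B) ≤ Σ_{k=1}^t |Y_k|·(1+β)^k ≤ (1+β)^2·D_M(A,B). -/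
theorem bucketing_oracle_matrix_dist {n t : ℕ} {α : Type*} [DecidableEq α]
    (A B : Fin n → Fin n → α) (O : Fin n → ℝ) (β : ℝ)
    (hβ : 0 < β) (hβ1 : β < 1)
    (dH : Fin n → ℕ)
    (hdH : ∀ i, dH i = (Finset.univ.filter (fun j : Fin n => A i j ≠ B i j)).card)
    (happrox : ∀ i, (1 - β) * (dH i : ℝ) ≤ O i ∧ O i ≤ (1 + β) * (dH i : ℝ))
    (hcover : ∀ i, 1 ≤ O i → O i < (1 + β) ^ t)
    (hsmall : ∀ i, O i < 1 → O i = 0 ∧ dH i = 0) :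
    (1 - β) * (∑ i, (dH i : ℝ)) ≤
      (∑ k ∈ Finset.Icc 1 t,
        ((Finset.univ.filter
          (fun i : Fin n => (1 + β) ^ (k - 1) ≤ O i ∧ O i < (1 + β) ^ k)).card : ℝ)
          * (1 + β) ^ k) ∧
    (∑ k ∈ Finset.Icc 1 t,
        ((Finset.univ.filter
          (fun i : Fin n => (1 + β) ^ (k - 1) ≤ O i ∧ O i < (1 + β) ^ k)).card : ℝ)
          * (1 + β) ^ k) ≤ (1 + β) ^ 2 * (∑ i, (dH i : ℝ)) := by
  have hx1 : (1 : ℝ) < 1 + β := by linarith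
  have hx0 : (0 : ℝ) < 1 + β := by linarith
  set x : ℝ := 1 + β with hxdef
  set g : Fin n → ℝ := fun i =>
    ∑ k ∈ Finset.Icc 1 t, if x ^ (k - 1) ≤ O i ∧ O i < x ^ k then x ^ k else 0 with hg
  have hS : (∑ k ∈ Finset.Icc 1 t,
        ((Finset.univ.filter
          (fun i : Fin n => x ^ (k - 1) ≤ O i ∧ O i < x ^ k)).card : ℝ) * x ^ k)
      = ∑ i : Fin n, g i := by
    rw [hg, Finset.sum_comm]
    refine Finset.sum_congr rfl fun k _ => ?_
    rw [Finset.sum_ite, Finset.sum_const_zero, add_zero, Finset.sum_const, nsmul_eq_mul]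
  have key : ∀ i : Fin n, (1 - β) * (dH i : ℝ) ≤ g i ∧ g i ≤ x ^ 2 * (dH i : ℝ) := by
    intro i
    by_cases h1 : 1 ≤ O i
    · have hex : ∃ k : ℕ, O i < x ^ k := ⟨t, hcover i h1⟩
      set k0 := Nat.find hex with hk0
      have hlt : O i < x ^ k0 := Nat.find_spec hex
      have hk0pos : 1 ≤ k0 := by
        by_contra h
        have : k0 = 0 := by omega
        rw [this] at hlt; simp at hlt; linarith
      have hge : x ^ (k0 - 1) ≤ O i := by
        have := Nat.find_min hex (m := k0 - 1) (by omega)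
        linarith [not_lt.mp this]
      have hk0t : k0 ≤ t := Nat.find_min' hex (hcover i h1)
      have hmem : k0 ∈ Finset.Icc 1 t := Finset.mem_Icc.mpr ⟨hk0pos, hk0t⟩
      have hgval : g i = x ^ k0 := by
        rw [hg]
        refine Finset.sum_eq_single_of_mem k0 hmem ?_ |>.trans (if_pos ⟨hge, hlt⟩)
        intro k hk hne
        rw [if_neg]
        rintro ⟨hk1, hk2⟩
        rcases lt_or_gt_of_ne hne with hlt' | hgt'
        · have : x ^ k ≤ x ^ (k0 - 1) := pow_le_pow_right₀ (le_of_lt hx1) (by omega)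
          linarith
        · have : x ^ k0 ≤ x ^ (k - 1) := pow_le_pow_right₀ (le_of_lt hx1) (by omega)
          linarith
      constructor
      · rw [hgval]
        have := (happrox i).1
        linarith
      · rw [hgval]
        have hsplit : x ^ k0 = x * x ^ (k0 - 1) := by
          rw [← pow_succ']
          congr 1
          omega
        have h2 : x ^ (k0 - 1) ≤ x * (dH i : ℝ) := le_trans hge (happrox i).2
        calc x ^ k0 = x * x ^ (k0 - 1) := hsplit
          _ ≤ x * (x * (dH i : ℝ)) := by nlinarith
          _ = x ^ 2 * (dH i : ℝ) := by ring
    · push_neg at h1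
      obtain ⟨hO0, hd0⟩ := hsmall i h1
      have hgval : g i = 0 := by
        rw [hg]
        refine Finset.sum_eq_zero fun k _ => ?_
        rw [if_neg]
        rintro ⟨hk1, _⟩
        have : (0 : ℝ) < x ^ (k - 1) := pow_pos hx0 _
        rw [hO0] at hk1
        linarith
      rw [hgval, hd0]
      norm_num
  rw [hS]
  constructor
  · rw [Finset.mul_sum]
    exact Finset.sum_le_sum fun i _ => (key i).1
  · rw [Finset.mul_sum]
    exact Finset.sum_le_sum fun i _ => (key i).2
end

section
/- Let A, B be n×n matrices, and for each bucket k ∈ L assume every i ∈ Y_k satisfies (1+ε/50)^(k-1) ≤ d_H(A(i,·),B(i,·)) ≤ (1+ε/50)^k. Let d_L = Σ_{k∈L} Σ_{i∈Y_k} d_H(A(i,·),B(i,·)) and suppose for each k ∈ L an estimate m_k satisfies (1-ε/50)|Y_k| ≤ m_k ≤ (1+ε/50)|Y_k|. Then d̂_L = Σ_{k∈L} m_k·(1+ε/50)^k satisfies (1-ε/50)·d_L ≤ d̂_L ≤ (1+ε/50)³·d_L. -/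
theorem large_bucket_estimate {n : ℕ} {α : Type*} [DecidableEq α]
    (A B : Fin n → Fin n → α) (L : Finset ℕ) (Y : ℕ → Finset (Fin n))
    (m : ℕ → ℝ) (ε : ℝ) (hε : 0 < ε) (hε' : ε < 1/2)
    (hbucket : ∀ k ∈ L, ∀ i ∈ Y k,
      (1 + ε/50) ^ (k - 1) ≤
          ((Finset.univ.filter (fun j : Fin n => A i j ≠ B i j)).card : ℝ) ∧
        ((Finset.univ.filter (fun j : Fin n => A i j ≠ B i j)).card : ℝ) ≤
          (1 + ε/50) ^ k)
    (hm : ∀ k ∈ L, (1 - ε/50) * ((Y k).card : ℝ) ≤ m k ∧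
      m k ≤ (1 + ε/50) * ((Y k).card : ℝ)) :
    (1 - ε/50) *
        (∑ k ∈ L, ∑ i ∈ Y k,
          ((Finset.univ.filter (fun j : Fin n => A i j ≠ B i j)).card : ℝ)) ≤
      (∑ k ∈ L, m k * (1 + ε/50) ^ k) ∧
    (∑ k ∈ L, m k * (1 + ε/50) ^ k) ≤
      (1 + ε/50) ^ 3 *
        (∑ k ∈ L, ∑ i ∈ Y k,
          ((Finset.univ.filter (fun j : Fin n => A i j ≠ B i j)).card : ℝ)) := by
  set δ := ε / 50 with hδdef
  have hδ0 : 0 < δ := by positivity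
  have hδ1 : δ < 1 := by rw [hδdef]; linarith
  have hb1 : (1:ℝ) ≤ 1 + δ := by linarith
  have key : ∀ k ∈ L,
      (1 - δ) * (∑ i ∈ Y k,
          ((Finset.univ.filter (fun j : Fin n => A i j ≠ B i j)).card : ℝ))
        ≤ m k * (1 + δ) ^ k ∧
      m k * (1 + δ) ^ k ≤ (1 + δ) ^ 3 * (∑ i ∈ Y k,
          ((Finset.univ.filter (fun j : Fin n => A i j ≠ B i j)).card : ℝ)) := by
    intro k hk
    have hub : (∑ i ∈ Y k,
        ((Finset.univ.filter (fun j : Fin n => A i j ≠ B i j)).card : ℝ))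
        ≤ (Y k).card • ((1 + δ) ^ k) :=
      Finset.sum_le_card_nsmul _ _ _ (fun i hi => (hbucket k hk i hi).2)
    have hlb : (Y k).card • ((1 + δ) ^ (k - 1)) ≤ (∑ i ∈ Y k,
        ((Finset.univ.filter (fun j : Fin n => A i j ≠ B i j)).card : ℝ)) :=
      Finset.card_nsmul_le_sum _ _ _ (fun i hi => (hbucket k hk i hi).1)
    rw [nsmul_eq_mul] at hub hlb
    have hmk := hm k hk
    have hc0 : (0:ℝ) ≤ ((Y k).card : ℝ) := Nat.cast_nonneg _
    have hp0 : (0:ℝ) < (1 + δ) ^ k := by positivity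
    have hp1 : (0:ℝ) < (1 + δ) ^ (k - 1) := by positivity
    have hpow : (1 + δ) ^ k ≤ (1 + δ) ^ (k - 1) * (1 + δ) := by
      rw [← pow_succ]
      exact pow_le_pow_right₀ hb1 (by omega)
    constructor
    · have h1 : (1 - δ) * (∑ i ∈ Y k,
          ((Finset.univ.filter (fun j : Fin n => A i j ≠ B i j)).card : ℝ))
          ≤ (1 - δ) * (((Y k).card : ℝ) * (1 + δ) ^ k) := by
        apply mul_le_mul_of_nonneg_left hub (by linarith)
      have h2 : (1 - δ) * (((Y k).card : ℝ) * (1 + δ) ^ k)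
          ≤ m k * (1 + δ) ^ k := by
        rw [← mul_assoc]
        exact mul_le_mul_of_nonneg_right hmk.1 hp0.le
      linarith
    · have h2 : m k * (1 + δ) ^ k ≤ (1 + δ) * ((Y k).card : ℝ) * (1 + δ) ^ k :=
        mul_le_mul_of_nonneg_right hmk.2 hp0.le
      have h3 : (1 + δ) * ((Y k).card : ℝ) * (1 + δ) ^ k
          ≤ (1 + δ) * ((Y k).card : ℝ) * ((1 + δ) ^ (k - 1) * (1 + δ)) := by
        apply mul_le_mul_of_nonneg_left hpow
        positivity
      have h4 : (1 + δ) * ((Y k).card : ℝ) * ((1 + δ) ^ (k - 1) * (1 + δ))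
          ≤ (1 + δ) ^ 3 * (((Y k).card : ℝ) * (1 + δ) ^ (k - 1)) := by
        nlinarith [mul_nonneg (mul_nonneg (mul_nonneg hδ0.le hc0) hp1.le) (mul_self_nonneg (1+δ)), mul_nonneg (mul_nonneg hδ0.le hc0) hp1.le]
      have h5 : (1 + δ) ^ 3 * (((Y k).card : ℝ) * (1 + δ) ^ (k - 1))
          ≤ (1 + δ) ^ 3 * (∑ i ∈ Y k,
            ((Finset.univ.filter (fun j : Fin n => A i j ≠ B i j)).card : ℝ)) := by
        apply mul_le_mul_of_nonneg_left hlb (by positivity)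
      linarith
  constructor
  · rw [Finset.mul_sum]
    exact Finset.sum_le_sum (fun k hk => (key k hk).1)
  · rw [Finset.mul_sum]
    exact Finset.sum_le_sum (fun k hk => (key k hk).2)
end
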